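/- Let L be a distributive lattice, n a positive integer, and A a nonempty set. If a map T : L^n → A is total orderization invariant, then T is symmetric: for every permutation σ of {1,...,n} and all x_1,...,x_n ∈ L, T(x_{σ(1)},...,x_{σ(n)}) = T(x_1,...,x_n). -/
import Mathlib


open Finset

/-- `Mk x k` is `M_{k+1}(x_1,...,x_n)` (`k : Fin n` represents the 1-indexed index `k+1`):
the supremum over all subsets `I` of `{1,...,n}` of cardinality `n + 1 - (k+1) = n - k` of
the infima `⋀_{i ∈ I} x i`. -/
def Mk {L : Type*} [Lattice L] {n : ℕ} (x : Fin n → L) (k : Fin n) : L :=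
  ((univ : Finset (Fin n)).powersetCard (n - k.val)).attach.sup'
    (attach_nonempty_iff.mpr (powersetCard_nonempty.mpr (by simp)))
    fun I => I.1.inf' (card_pos.mp (by
      have h := (mem_powersetCard.mp I.2).2
      have hk := k.isLt
      omega)) x


lemma Mk_perm {L : Type*} [Lattice L] {n : ℕ} (x : Fin n → L) (σ : Equiv.Perm (Fin n))
    (k : Fin n) : Mk (fun i => x (σ i)) k = Mk x k := by
  unfold Mk
  apply le_antisymm
  · apply sup'_le
    intro I _
    have hmem : I.1.image σ ∈ (univ : Finset (Fin n)).powersetCard (n - k.val) := by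
      rw [mem_powersetCard]
      refine ⟨subset_univ _, ?_⟩
      rw [card_image_of_injective _ σ.injective, (mem_powersetCard.mp I.2).2]
    have hI : I.1.Nonempty := card_pos.mp (by
      have h := (mem_powersetCard.mp I.2).2
      have hk := k.isLt; omega)
    refine le_trans (le_of_eq ?_) (le_sup' _ (mem_attach _ ⟨_, hmem⟩))
    exact (inf'_image (hI.image _) _).symm
  · apply sup'_le
    intro I _
    have hmem : I.1.image σ.symm ∈ (univ : Finset (Fin n)).powersetCard (n - k.val) := by
      rw [mem_powersetCard]
      refine ⟨subset_univ _, ?_⟩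
      rw [card_image_of_injective _ σ.symm.injective, (mem_powersetCard.mp I.2).2]
    refine le_trans (le_of_eq ?_) (le_sup' _ (mem_attach _ ⟨_, hmem⟩))
    rw [inf'_image]
    congr 1
    ext i
    simp

/-- Every total orderization invariant map `T : L^n → A` on a distributive lattice `L`
(with `A` a nonempty set) is symmetric. -/
theorem statement7 {L A : Type*} [DistribLattice L] [Nonempty A] {n : ℕ} (hn : 0 < n)
    (T : (Fin n → L) → A)
    (hT : ∀ x : Fin n → L, T x = T (fun k => Mk x k))
    (σ : Equiv.Perm (Fin n)) (x : Fin n → L) :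
    T (fun i => x (σ i)) = T x := by
  rw [hT x, hT (fun i => x (σ i))]
  congr 1
  ext k
  exact Mk_perm x σ k
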